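/- Under the hypotheses of the preceding construction (orthonormal basis of subspaces {E_i}, T surjective satisfying the uniform angle condition, W_i = T(E_i), admissible weights w), if additionally ker T ∩ E_i = {0} for every i ∈ I, then the excess of the fusion frame (w_i, W_i) equals dim ker T. -/

import Mathlib

noncomputable section

open scoped InnerProductSpace ENNReal

universe u
variable {H K : Type u} [NormedAddCommGroup H] [InnerProductSpace ℂ H] [CompleteSpace H]
  [NormedAddCommGroup K] [InnerProductSpace ℂ K] [CompleteSpace K]

/-- Orthogonal projection onto (the closure of) a subspace, as an operator `H →L[ℂ] H`. -/
def sproj (M : Submodule ℂ H) : H →L[ℂ] H :=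
  M.topologicalClosure.subtypeL ∘L M.topologicalClosure.orthogonalProjectionOnto

/-- The reduced minimum modulus of a bounded operator. -/
def gammaRMM (T : H →L[ℂ] K) : ℝ :=
  sInf ((fun x => ‖T x‖) '' {x : H | x ∈ (LinearMap.ker (T : H →ₗ[ℂ] K))ᗮ ∧ ‖x‖ = 1})

/-- `M ⊖ N`. -/
def ominus (M N : Submodule ℂ H) : Submodule ℂ H := M ⊓ (M ⊓ N)ᗮ

open Classical in
/-- The cosine of the Friedrichs angle between two subspaces. -/
def angleCos (M N : Submodule ℂ H) : ℝ :=
  if M ≤ N ∨ N ≤ M then 0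
  else sSup {r : ℝ | ∃ x ∈ ominus M N, ∃ y ∈ ominus N M,
    ‖x‖ = 1 ∧ ‖y‖ = 1 ∧ r = ‖(inner ℂ x y : ℂ)‖}

/-- The sine of the Friedrichs angle. -/
def angleSin (M N : Submodule ℂ H) : ℝ := Real.sqrt (1 - angleCos M N ^ 2)

variable {I : Type u}

/-- `(w i, W i)` is a fusion frame (frame of subspaces) with bounds `A`, `B`. -/
def IsFusionFrameWith (w : I → ℝ) (W : I → Submodule ℂ H) (A B : ℝ) : Prop :=
  0 < A ∧ 0 < B ∧ (∀ i, IsClosed (W i : Set H)) ∧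
    ∀ f : H, A * ‖f‖ ^ 2 ≤ ∑' i, w i ^ 2 * ‖sproj (W i) f‖ ^ 2 ∧
      ∑' i, w i ^ 2 * ‖sproj (W i) f‖ ^ 2 ≤ B * ‖f‖ ^ 2

/-- `(w i, W i)` is a fusion frame for some bounds. -/
def IsFusionFrame (w : I → ℝ) (W : I → Submodule ℂ H) : Prop :=
  ∃ A B : ℝ, IsFusionFrameWith w W A B

/-- a family of mutually orthogonal closed subspaces with dense span. -/
def IsOBS (E : I → Submodule ℂ H) : Prop :=
  (∀ i, IsClosed (E i : Set H)) ∧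
  (∀ i j, i ≠ j → ∀ x ∈ E i, ∀ y ∈ E j, (inner ℂ x y : ℂ) = 0) ∧
  (⨆ i, E i).topologicalClosure = ⊤

/-- A minimal sequence of subspaces. -/
def IsMinimal (W : I → Submodule ℂ H) : Prop :=
  ∀ i, W i ⊓ (⨆ j ∈ {j : I | j ≠ i}, W j).topologicalClosure = ⊥

/-- The kernel of the synthesis operator of `(w i, W i)`, as a subspace of `⊕₂ W i`. -/
def synthesisKernel (w : I → ℝ) (W : I → Submodule ℂ H) :
    Submodule ℂ (lp (fun i => W i) 2) where
  carrier := {g | ∀ f : H, HasSum (fun i => (w i : ℂ) * (inner ℂ ((g i : H)) f : ℂ)) 0}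
  zero_mem' := by
    intro f
    have : (fun i => (w i : ℂ) * (inner ℂ (((0 : lp (fun i => W i) 2) i : H)) f : ℂ)) =
        fun _ => 0 := by
      funext i; simp [lp.coeFn_zero]
    rw [this]; exact hasSum_zero
  add_mem' := by
    intro a b ha hb f
    have h := (ha f).add (hb f)
    rw [add_zero] at h
    have he : (fun i => (w i : ℂ) * (inner ℂ (((a + b) i : H)) f : ℂ)) =
        fun i => (w i : ℂ) * (inner ℂ ((a i : H)) f : ℂ) +
          (w i : ℂ) * (inner ℂ ((b i : H)) f : ℂ) := by
      funext i
      have h2 : ((a + b) i : ↥(W i)) = a i + b i := by rw [lp.coeFn_add]; rfl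
      rw [h2, Submodule.coe_add, inner_add_left]; ring
    rw [he]; exact h
  smul_mem' := by
    intro c a ha f
    have h := (ha f).mul_left (starRingEnd ℂ c)
    rw [mul_zero] at h
    have he : (fun i => (w i : ℂ) * (inner ℂ (((c • a) i : H)) f : ℂ)) =
        fun i => (starRingEnd ℂ c) * ((w i : ℂ) * (inner ℂ ((a i : H)) f : ℂ)) := by
      funext i
      have h2 : ((c • a) i : ↥(W i)) = c • a i := by rw [lp.coeFn_smul]; rfl
      rw [h2, Submodule.coe_smul, inner_smul_left]; ring
    rw [he]; exact h

/-- The excess of a fusion frame. -/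
def fusionExcess (w : I → ℝ) (W : I → Submodule ℂ H) : Cardinal :=
  Module.rank ℂ (synthesisKernel w W)

/-! Decompose `K ≅ ⊕₂ E i` along the orthonormal basis of subspaces and map each `E i` onto
`W i = T (E i)` by `x ↦ (w i)⁻¹ • T x`. The weight condition bounds these maps above by `√B` and
below by `√A` uniformly in `i` (below, because `ker T ⊓ E i = ⊥` makes `E i` orthogonal to
`ker (T ∘ P_{E i})`), so they assemble into an isomorphism `Φ : K ≃ ⊕₂ W i`. As
`T x = ∑ i, w i • Φ x i`, `Φ` carries `ker T` onto the kernel of the synthesis operator. -/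

namespace lp

variable {ι 𝕜 : Type*} [NormedField 𝕜] {E F : ι → Type*}
  [∀ i, NormedAddCommGroup (E i)] [∀ i, NormedSpace 𝕜 (E i)]
  [∀ i, NormedAddCommGroup (F i)] [∀ i, NormedSpace 𝕜 (F i)] {p : ℝ≥0∞}

def mapₗ (φ : ∀ i, E i →ₗ[𝕜] F i) (C : ℝ) (hφ : ∀ i x, ‖φ i x‖ ≤ C * ‖x‖) :
    lp E p →ₗ[𝕜] lp F p where
  toFun a := ⟨fun i => φ i (a i), ((lp.memℓp a).norm.const_smul C).mono fun i => hφ i (a i)⟩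
  map_add' a b := lp.ext <| funext fun i => map_add (φ i) (a i) (b i)
  map_smul' c a := lp.ext <| funext fun i => map_smul (φ i) c (a i)

@[simp]
theorem mapₗ_apply (φ : ∀ i, E i →ₗ[𝕜] F i) (C : ℝ) (hφ : ∀ i x, ‖φ i x‖ ≤ C * ‖x‖)
    (a : lp E p) (i : ι) : mapₗ φ C hφ a i = φ i (a i) := rfl

def congrRightₗ (ρ : ∀ i, E i ≃ₗ[𝕜] F i) {c C : ℝ} (hc : 0 < c)
    (hlow : ∀ i x, c * ‖x‖ ≤ ‖ρ i x‖) (hup : ∀ i x, ‖ρ i x‖ ≤ C * ‖x‖) :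
    lp E p ≃ₗ[𝕜] lp F p :=
  LinearEquiv.ofLinearMap (mapₗ (fun i => ρ i) C hup)
    (mapₗ (fun i => (ρ i).symm) c⁻¹ fun i y => by
      rw [le_inv_mul_iff₀ hc]
      simpa using hlow i ((ρ i).symm y))
    (LinearMap.ext fun a => lp.ext <| funext fun i => by simp)
    (LinearMap.ext fun a => lp.ext <| funext fun i => by simp)

end lp

namespace LinearMap

variable {R V V' : Type*} [Ring R] [AddCommGroup V] [Module R V] [AddCommGroup V'] [Module R V']

def submoduleMapEquivOfDisjoint (f : V →ₗ[R] V') (M : Submodule R V)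
    (h : Disjoint M (ker f)) : M ≃ₗ[R] M.map f :=
  .ofBijective (f.submoduleMap M)
    ⟨submoduleMap_injective_of_injOn (disjoint_ker_iff_injOn.mp h), f.submoduleMap_surjective M⟩

end LinearMap

theorem Real.le_sqrt_mul_of_sq_div_le {a b w : ℝ} (hb : 0 < b) (hw : 0 ≤ w)
    (h : a ^ 2 / b ≤ w ^ 2) : a ≤ √b * w := by
  rw [← Real.sqrt_sq hw, ← Real.sqrt_mul hb.le]
  rw [div_le_iff₀ hb] at h
  exact (le_abs_self a).trans (Real.abs_le_sqrt (by linarith))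

theorem Real.sqrt_mul_le_of_le_sq_div {a c w : ℝ} (ha : 0 < a) (hc : 0 ≤ c) (hw : 0 ≤ w)
    (h : w ^ 2 ≤ c ^ 2 / a) : √a * w ≤ c := by
  rw [← Real.sqrt_sq hw, ← Real.sqrt_mul ha.le, ← Real.sqrt_sq hc]
  rw [le_div_iff₀ ha] at h
  exact Real.sqrt_le_sqrt (by linarith)

section Projection

variable {Y : Type*} [NormedAddCommGroup Y] [NormedSpace ℂ Y] {M : Submodule ℂ H}

theorem sproj_apply_mem (hM : IsClosed (M : Set H)) (x : H) : sproj M x ∈ M :=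
  hM.submodule_topologicalClosure_eq.le (M.topologicalClosure.orthogonalProjectionOnto x).2

theorem sproj_eq_self {x : H} (hx : x ∈ M) : sproj M x = x :=
  Submodule.starProjection_eq_self_iff.mpr (M.le_topologicalClosure hx)

theorem ker_comp_sproj (hM : IsClosed (M : Set H)) (T : H →L[ℂ] Y)
    (hker : LinearMap.ker (T : H →ₗ[ℂ] Y) ⊓ M = ⊥) :
    LinearMap.ker ((T ∘L sproj M : H →L[ℂ] Y) : H →ₗ[ℂ] Y) = Mᗮ := by
  ext u
  have hP : sproj M u = 0 ↔ u ∈ M.topologicalClosureᗮ :=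
    M.topologicalClosure.starProjection_apply_eq_zero_iff
  rw [hM.submodule_topologicalClosure_eq] at hP
  rw [LinearMap.mem_ker, ← hP]
  constructor
  · intro hTu
    have : sproj M u ∈ LinearMap.ker (T : H →ₗ[ℂ] Y) ⊓ M := ⟨hTu, sproj_apply_mem hM u⟩
    rwa [hker, Submodule.mem_bot] at this
  · intro hu
    simp [hu]

theorem norm_apply_le_norm_comp_sproj_mul (T : H →L[ℂ] Y) {x : H} (hx : x ∈ M) :
    ‖T x‖ ≤ ‖T ∘L sproj M‖ * ‖x‖ := by
  simpa [sproj_eq_self hx] using (T ∘L sproj M).le_opNorm x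

end Projection

section InnerProductSpace

variable {X Y : Type u} [NormedAddCommGroup X] [InnerProductSpace ℂ X]
  [NormedAddCommGroup Y] [InnerProductSpace ℂ Y]

theorem gammaRMM_nonneg (S : X →L[ℂ] Y) : 0 ≤ gammaRMM S :=
  Real.sInf_nonneg <| by rintro _ ⟨x, -, rfl⟩; exact norm_nonneg _

theorem gammaRMM_mul_norm_le (S : X →L[ℂ] Y) {x : X}
    (hx : x ∈ (LinearMap.ker (S : X →ₗ[ℂ] Y))ᗮ) : gammaRMM S * ‖x‖ ≤ ‖S x‖ := by
  rcases eq_or_ne x 0 with rfl | hx0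
  · simp
  have hunit : gammaRMM S ≤ ‖S ((‖x‖ : ℂ)⁻¹ • x)‖ :=
    csInf_le ⟨0, by rintro _ ⟨y, -, rfl⟩; exact norm_nonneg _⟩
      ⟨_, ⟨Submodule.smul_mem _ _ hx, norm_smul_inv_norm hx0⟩, rfl⟩
  rw [map_smul, norm_smul, norm_inv, Complex.norm_real, norm_norm,
    le_inv_mul_iff₀ (norm_pos_iff.mpr hx0)] at hunit
  linarith

theorem gammaRMM_comp_sproj_mul_norm_le {M : Submodule ℂ H} (hM : IsClosed (M : Set H))
    (T : H →L[ℂ] Y) (hker : LinearMap.ker (T : H →ₗ[ℂ] Y) ⊓ M = ⊥) {x : H} (hx : x ∈ M) :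
    gammaRMM (T ∘L sproj M) * ‖x‖ ≤ ‖T x‖ := by
  have hperp : x ∈ (LinearMap.ker ((T ∘L sproj M : H →L[ℂ] Y) : H →ₗ[ℂ] Y))ᗮ := by
    rw [ker_comp_sproj hM T hker]
    exact Submodule.le_orthogonal_orthogonal M hx
  simpa [sproj_eq_self hx] using gammaRMM_mul_norm_le _ hperp

theorem mem_synthesisKernel_iff_of_hasSum {w : I → ℝ} {W : I → Submodule ℂ Y}
    {g : lp (fun i => W i) 2} {s : Y} (hs : HasSum (fun i => (w i : ℂ) • (g i : Y)) s) :
    g ∈ synthesisKernel w W ↔ s = 0 := by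
  have hinner : ∀ f : Y, HasSum (fun i => (w i : ℂ) * ⟪(g i : Y), f⟫_ℂ) ⟪s, f⟫_ℂ := by
    intro f
    simpa [inner_smul_left] using (hs.mapL (innerSL ℂ f)).star
  refine ⟨fun hg => ?_, fun hs0 f => ?_⟩
  · exact inner_self_eq_zero.mp ((hinner s).unique (hg s))
  · simpa [hs0] using hinner f

theorem map_ker_eq_synthesisKernel {V : Type*} [AddCommGroup V] [Module ℂ V] {w : I → ℝ}
    {W : I → Submodule ℂ Y} (T : V →ₗ[ℂ] Y) (Φ : V ≃ₗ[ℂ] lp (fun i => W i) 2)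
    (hΦ : ∀ x, HasSum (fun i => (w i : ℂ) • (Φ x i : Y)) (T x)) :
    (LinearMap.ker T).map (Φ : V →ₗ[ℂ] lp (fun i => W i) 2) = synthesisKernel w W := by
  ext g
  rw [Submodule.mem_map_equiv, LinearMap.mem_ker, mem_synthesisKernel_iff_of_hasSum]
  simpa using hΦ (Φ.symm g)

end InnerProductSpace

section WeightedImage

variable {X Y : Type*} [NormedAddCommGroup X] [NormedSpace ℂ X]
  [NormedAddCommGroup Y] [NormedSpace ℂ Y]

def weightedImageEquiv (T : X →L[ℂ] Y) (M : Submodule ℂ X)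
    (hker : LinearMap.ker (T : X →ₗ[ℂ] Y) ⊓ M = ⊥) (c : ℝ) (hc : 0 < c) :
    M ≃ₗ[ℂ] M.map (T : X →ₗ[ℂ] Y) :=
  ((T : X →ₗ[ℂ] Y).submoduleMapEquivOfDisjoint M (by rwa [disjoint_iff, inf_comm])).trans
    (LinearEquiv.smulOfNeZero ℂ _ (c : ℂ)⁻¹ (by exact_mod_cast (inv_pos.mpr hc).ne'))

theorem norm_weightedImageEquiv_apply (T : X →L[ℂ] Y) (M : Submodule ℂ X)
    (hker : LinearMap.ker (T : X →ₗ[ℂ] Y) ⊓ M = ⊥) {c : ℝ} (hc : 0 < c) (x : M) :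
    ‖weightedImageEquiv T M hker c hc x‖ = c⁻¹ * ‖T x‖ := by
  change ‖(c : ℂ)⁻¹ • T x‖ = _
  rw [norm_smul, norm_inv, Complex.norm_real, Real.norm_of_nonneg hc.le]

end WeightedImage

section WeightedImageBounds

variable {Y : Type u} [NormedAddCommGroup Y] [InnerProductSpace ℂ Y]
  (T : H →L[ℂ] Y) {M : Submodule ℂ H} (hker : LinearMap.ker (T : H →ₗ[ℂ] Y) ⊓ M = ⊥)

theorem sqrt_mul_norm_le_norm_weightedImageEquiv_apply (hM : IsClosed (M : Set H))
    {a c : ℝ} (ha : 0 < a) (hc : 0 < c) (hca : c ^ 2 ≤ gammaRMM (T ∘L sproj M) ^ 2 / a)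
    (x : M) : √a * ‖x‖ ≤ ‖weightedImageEquiv T M hker c hc x‖ := by
  have hγ := Real.sqrt_mul_le_of_le_sq_div ha (gammaRMM_nonneg _) hc.le hca
  rw [norm_weightedImageEquiv_apply, le_inv_mul_iff₀ hc]
  calc c * (√a * ‖x‖) = √a * c * ‖x‖ := by ring
    _ ≤ gammaRMM (T ∘L sproj M) * ‖x‖ := by gcongr
    _ ≤ ‖T x‖ := gammaRMM_comp_sproj_mul_norm_le hM T hker x.2

theorem norm_weightedImageEquiv_apply_le {b c : ℝ} (hb : 0 < b) (hc : 0 < c)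
    (hcb : ‖T ∘L sproj M‖ ^ 2 / b ≤ c ^ 2) (x : M) :
    ‖weightedImageEquiv T M hker c hc x‖ ≤ √b * ‖x‖ := by
  have hT := Real.le_sqrt_mul_of_sq_div_le hb hc.le hcb
  rw [norm_weightedImageEquiv_apply, inv_mul_le_iff₀ hc]
  calc ‖T x‖ ≤ ‖T ∘L sproj M‖ * ‖x‖ := norm_apply_le_norm_comp_sproj_mul T x.2
    _ ≤ √b * c * ‖x‖ := by gcongr
    _ = c * (√b * ‖x‖) := by ring

end WeightedImageBounds

theorem IsOBS.isHilbertSum {E : I → Submodule ℂ K} (hE : IsOBS E) :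
    haveI := fun i => (hE.1 i).completeSpace_coe
    IsHilbertSum ℂ (fun i => E i) fun i => (E i).subtypeₗᵢ :=
  haveI := fun i => (hE.1 i).completeSpace_coe
  .mkInternal _ (fun i j hij x y => hE.2.1 i j hij x x.2 y y.2) hE.2.2.ge

theorem fusionExcess_eq_rank_ker_general {I : Type u} (E : I → Submodule ℂ K) (hE : IsOBS E)
    (T : K →L[ℂ] H) (A B : ℝ) (hA : 0 < A) (hB : 0 < B)
    (w : I → ℝ) (hw : ∀ i, 0 < w i)
    (hwi : ∀ i, ‖T ∘L sproj (E i)‖ ^ 2 / B ≤ w i ^ 2 ∧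
      w i ^ 2 ≤ gammaRMM (T ∘L sproj (E i)) ^ 2 / A)
    (hker : ∀ i, LinearMap.ker (T : K →ₗ[ℂ] H) ⊓ E i = ⊥) :
    fusionExcess w (fun i => (E i).map (T : K →ₗ[ℂ] H)) = Module.rank ℂ (LinearMap.ker (T : K →ₗ[ℂ] H)) := by
  let ρ i := weightedImageEquiv T (E i) (hker i) (w i) (hw i)
  let U := hE.isHilbertSum.linearIsometryEquiv
  let Φ := U.toLinearEquiv.trans <| lp.congrRightₗ ρ (Real.sqrt_pos.mpr hA)
    (fun i =>
      sqrt_mul_norm_le_norm_weightedImageEquiv_apply T (hker i) (hE.1 i) hA (hw i) (hwi i).2)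
    (fun i => norm_weightedImageEquiv_apply_le T (hker i) hB (hw i) (hwi i).1)
  have hΦ : ∀ x, HasSum (fun i => (w i : ℂ) • (Φ x i : H)) (T x) := by
    intro x
    convert (hE.isHilbertSum.hasSum_linearIsometryEquiv_symm (U x)).mapL T using 1
    · funext i
      exact smul_inv_smul₀ (Complex.ofReal_ne_zero.mpr (hw i).ne') _
    · exact congrArg T (U.symm_apply_apply x).symm
  rw [fusionExcess, ← map_ker_eq_synthesisKernel (T : K →ₗ[ℂ] H) Φ hΦ]
  exact (Φ.submoduleMap _).rank_eq.symm

theorem fusionExcess_eq_rank_ker {I : Type u} (E : I → Submodule ℂ K) (hE : IsOBS E)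
    (T : K →L[ℂ] H) (hT : Function.Surjective T) (A B : ℝ) (hA : 0 < A) (hB : 0 < B)
    (w : I → ℝ) (hw : ∀ i, 0 < w i) (hwb : BddAbove (Set.range w))
    (hwi : ∀ i, ‖T ∘L sproj (E i)‖ ^ 2 / B ≤ w i ^ 2 ∧
      w i ^ 2 ≤ gammaRMM (T ∘L sproj (E i)) ^ 2 / A)
    (hker : ∀ i, LinearMap.ker (T : K →ₗ[ℂ] H) ⊓ E i = ⊥) :
    fusionExcess w (fun i => (E i).map (T : K →ₗ[ℂ] H)) = Module.rank ℂ (LinearMap.ker (T : K →ₗ[ℂ] H)) :=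
  fusionExcess_eq_rank_ker_general E hE T A B hA hB w hw hwi hker

end
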